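/- Existence of O(n)-bounded hyperedge leverage score overestimates: There exists a universal constant C > 0 such that every weighted hypergraph H = (V, E, w) with |V| = n, rank r ≥ 2, and strictly positive weights admits a (C·n)-overestimate; that is, there exist z ∈ ℝ^E_{≥0} with Σ_{e∈E} z_e ≤ C·n and an underlying graph G of H such that z_e ≥ w_e · max_{f∈C(e,2)} R_f for every e ∈ E, where R_f is the effective resistance of the pair f in G. -/

import Mathlib

open Matrix BigOperators

/-- The vector `δ_i - δ_j` in `ℝ^n`. -/
noncomputable def dvec {n : ℕ} (i j : Fin n) : Fin n → ℝ :=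
  fun k => (if k = i then (1 : ℝ) else 0) - (if k = j then (1 : ℝ) else 0)

/-- The rank-one matrix `(δ_i - δ_j)(δ_i - δ_j)ᵀ`, as a function of the unordered pair `{i,j}`. -/
noncomputable def edgeMat {n : ℕ} : Sym2 (Fin n) → Matrix (Fin n) (Fin n) ℝ :=
  Sym2.lift ⟨fun i j => Matrix.vecMulVec (dvec i j) (dvec i j), by
    intro i j
    ext a b
    simp [Matrix.vecMulVec_apply, dvec]
    ring⟩

/-- `M` is the Moore–Penrose pseudoinverse of `L` (the four Penrose equations). -/
def IsMP {n : ℕ} (L M : Matrix (Fin n) (Fin n) ℝ) : Prop :=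
  L * M * L = L ∧ M * L * M = M ∧ (L * M)ᵀ = L * M ∧ (M * L)ᵀ = M * L

/-- The Moore–Penrose pseudoinverse (chosen via the Penrose equations, which determine
it uniquely whenever it exists). -/
noncomputable def pinv {n : ℕ} (L : Matrix (Fin n) (Fin n) ℝ) : Matrix (Fin n) (Fin n) ℝ :=
  haveI := Classical.propDecidable (∃ M, IsMP L M)
  if h : ∃ M, IsMP L M then h.choose else 0

/-- Effective resistance `(δ_i - δ_j)ᵀ L⁺ (δ_i - δ_j)` of an unordered pair, given `L⁺`. -/
noncomputable def res {n : ℕ} (Lp : Matrix (Fin n) (Fin n) ℝ) : Sym2 (Fin n) → ℝ :=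
  Sym2.lift ⟨fun i j => dvec i j ⬝ᵥ (Lp *ᵥ dvec i j), by
    intro i j
    show dvec i j ⬝ᵥ (Lp *ᵥ dvec i j) = dvec j i ⬝ᵥ (Lp *ᵥ dvec j i)
    have h : dvec j i = -(dvec i j) := by
      funext k; simp [dvec, Pi.neg_apply]
    rw [h]
    simp [Matrix.mulVec_neg]⟩

/-- Laplacian of the weighted graph with edge set `F` and weights `c`. -/
noncomputable def lapG {n : ℕ} (F : Finset (Sym2 (Fin n))) (c : Sym2 (Fin n) → ℝ) :
    Matrix (Fin n) (Fin n) ℝ :=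
  ∑ f ∈ F, c f • edgeMat f

/-- The unordered pairs of distinct vertices contained in `e`. -/
def pairs {n : ℕ} (e : Finset (Fin n)) : Finset (Sym2 (Fin n)) :=
  e.sym2.filter fun f => ¬ f.IsDiag

/-- `Q_e(x) = max_{{i,j} ⊆ e} (x_i - x_j)²`. -/
noncomputable def Qe {n : ℕ} (x : Fin n → ℝ) (e : Finset (Fin n)) : ℝ :=
  ⨆ i ∈ e, ⨆ j ∈ e, (x i - x j) ^ 2

/-- The hypergraph energy `Q_H(x) = Σ_e w_e Q_e(x)`. -/
noncomputable def QH {n : ℕ} (E : Finset (Finset (Fin n))) (w : Finset (Fin n) → ℝ)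
    (x : Fin n → ℝ) : ℝ :=
  ∑ e ∈ E, w e * Qe x e

/-- Laplacian of the underlying (multi)graph of a hypergraph with weights `c e f`. -/
noncomputable def lapU {n : ℕ} (E : Finset (Finset (Fin n)))
    (c : Finset (Fin n) → Sym2 (Fin n) → ℝ) : Matrix (Fin n) (Fin n) ℝ :=
  ∑ e ∈ E, ∑ f ∈ pairs e, c e f • edgeMat f



section Aux

open Filter Topology

variable {n : ℕ}

lemma dvec_dot (i j : Fin n) (x : Fin n → ℝ) : dvec i j ⬝ᵥ x = x i - x j := by
  simp [dvec, dotProduct, sub_mul, Finset.sum_sub_distrib, ite_mul]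

lemma dot_dvec (i j : Fin n) (x : Fin n → ℝ) : x ⬝ᵥ dvec i j = x i - x j := by
  rw [dotProduct_comm]; exact dvec_dot i j x

lemma edgeMat_mk (i j : Fin n) : edgeMat s(i,j) = Matrix.vecMulVec (dvec i j) (dvec i j) := rfl

lemma res_mk (Lp : Matrix (Fin n) (Fin n) ℝ) (i j : Fin n) :
    res Lp s(i,j) = dvec i j ⬝ᵥ (Lp *ᵥ dvec i j) := rfl

lemma vecMulVec_mulVec' (u v x : Fin n → ℝ) :
    Matrix.vecMulVec u v *ᵥ x = (v ⬝ᵥ x) • u := by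
  funext i
  simp [Matrix.mulVec, Matrix.vecMulVec_apply, dotProduct, Finset.sum_mul, Finset.mul_sum,
    mul_comm, mul_assoc, mul_left_comm]

lemma edgeMat_mulVec (i j : Fin n) (x : Fin n → ℝ) :
    edgeMat s(i,j) *ᵥ x = (x i - x j) • dvec i j := by
  rw [edgeMat_mk, vecMulVec_mulVec', dvec_dot]

lemma quad_edgeMat_mk (i j : Fin n) (x : Fin n → ℝ) :
    x ⬝ᵥ (edgeMat s(i,j) *ᵥ x) = (x i - x j)^2 := by
  rw [edgeMat_mulVec, dotProduct_smul, smul_eq_mul, dot_dvec]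
  ring

lemma quad_edgeMat_nonneg (f : Sym2 (Fin n)) (x : Fin n → ℝ) :
    0 ≤ x ⬝ᵥ (edgeMat f *ᵥ x) := by
  induction f using Sym2.ind with
  | _ i j => rw [quad_edgeMat_mk]; positivity

lemma edgeMat_transpose (f : Sym2 (Fin n)) : (edgeMat f)ᵀ = edgeMat f := by
  induction f using Sym2.ind with
  | _ i j =>
    rw [edgeMat_mk]
    ext a b
    simp [Matrix.vecMulVec_apply, mul_comm]

lemma edgeMat_mulVec_one (f : Sym2 (Fin n)) : edgeMat f *ᵥ (fun _ => (1:ℝ)) = 0 := by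
  induction f using Sym2.ind with
  | _ i j =>
    rw [edgeMat_mulVec]
    simp

lemma trace_mul_vecMulVec (B : Matrix (Fin n) (Fin n) ℝ) (u v : Fin n → ℝ) :
    Matrix.trace (B * Matrix.vecMulVec u v) = v ⬝ᵥ (B *ᵥ u) := by
  simp only [Matrix.trace, Matrix.diag_apply, Matrix.mul_apply, Matrix.vecMulVec_apply,
    dotProduct, Matrix.mulVec, Finset.mul_sum]
  apply Finset.sum_congr rfl
  intro i _
  apply Finset.sum_congr rfl
  intro j _
  ring

lemma trace_mul_edgeMat (B : Matrix (Fin n) (Fin n) ℝ) (i j : Fin n) :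
    Matrix.trace (B * edgeMat s(i,j)) = dvec i j ⬝ᵥ (B *ᵥ dvec i j) := by
  rw [edgeMat_mk, trace_mul_vecMulVec]

lemma mem_pairs {e : Finset (Fin n)} {i j : Fin n} :
    s(i,j) ∈ pairs e ↔ i ∈ e ∧ j ∈ e ∧ i ≠ j := by
  simp [pairs, Finset.mem_filter, Finset.mk_mem_sym2_iff, Sym2.isDiag_iff_proj_eq]
  tauto

lemma sum_mulVec {α : Type*} (s : Finset α) (M : α → Matrix (Fin n) (Fin n) ℝ)
    (x : Fin n → ℝ) : (∑ a ∈ s, M a) *ᵥ x = ∑ a ∈ s, M a *ᵥ x := by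
  funext i
  simp only [Matrix.mulVec, dotProduct, Matrix.sum_apply, Finset.sum_apply, Finset.sum_mul]
  rw [Finset.sum_comm]

lemma dot_sum {α : Type*} (x : Fin n → ℝ) (s : Finset α) (v : α → Fin n → ℝ) :
    x ⬝ᵥ (∑ a ∈ s, v a) = ∑ a ∈ s, x ⬝ᵥ v a := by
  simp only [dotProduct, Finset.sum_apply, Finset.mul_sum]
  rw [Finset.sum_comm]

lemma lapU_transpose (E : Finset (Finset (Fin n))) (c : Finset (Fin n) → Sym2 (Fin n) → ℝ) :
    (lapU E c)ᵀ = lapU E c := by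
  unfold lapU
  rw [Matrix.transpose_sum]
  apply Finset.sum_congr rfl
  intro e _
  rw [Matrix.transpose_sum]
  apply Finset.sum_congr rfl
  intro f _
  rw [Matrix.transpose_smul, edgeMat_transpose]

lemma quad_lapU (E : Finset (Finset (Fin n))) (c : Finset (Fin n) → Sym2 (Fin n) → ℝ)
    (x : Fin n → ℝ) :
    x ⬝ᵥ (lapU E c *ᵥ x) = ∑ e ∈ E, ∑ f ∈ pairs e, c e f * (x ⬝ᵥ (edgeMat f *ᵥ x)) := by
  unfold lapU
  rw [sum_mulVec, dot_sum]
  apply Finset.sum_congr rfl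
  intro e _
  rw [sum_mulVec, dot_sum]
  apply Finset.sum_congr rfl
  intro f _
  rw [Matrix.smul_mulVec, dotProduct_smul, smul_eq_mul]

lemma quad_lapU_nonneg {E : Finset (Finset (Fin n))} {c : Finset (Fin n) → Sym2 (Fin n) → ℝ}
    (hc : ∀ e ∈ E, ∀ f ∈ pairs e, 0 ≤ c e f) (x : Fin n → ℝ) :
    0 ≤ x ⬝ᵥ (lapU E c *ᵥ x) := by
  rw [quad_lapU]
  apply Finset.sum_nonneg
  intro e he
  apply Finset.sum_nonneg
  intro f hf
  exact mul_nonneg (hc e he f hf) (quad_edgeMat_nonneg f x)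

lemma lapU_mulVec_one (E : Finset (Finset (Fin n))) (c : Finset (Fin n) → Sym2 (Fin n) → ℝ) :
    lapU E c *ᵥ (fun _ => (1:ℝ)) = 0 := by
  unfold lapU
  rw [sum_mulVec]
  apply Finset.sum_eq_zero
  intro e _
  rw [sum_mulVec]
  apply Finset.sum_eq_zero
  intro f _
  rw [Matrix.smul_mulVec, edgeMat_mulVec_one, smul_zero]

variable {n : ℕ}

lemma det_rank_two_update (A : Matrix (Fin n) (Fin n) ℝ) (hA : IsUnit A.det)
    (d d' : Fin n → ℝ) (s : ℝ) :
    (A + s • Matrix.vecMulVec d' d' - s • Matrix.vecMulVec d d).det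
      = A.det * ((1 + s * (d' ⬝ᵥ A⁻¹ *ᵥ d')) * (1 - s * (d ⬝ᵥ A⁻¹ *ᵥ d))
          + s^2 * ((d' ⬝ᵥ A⁻¹ *ᵥ d) * (d ⬝ᵥ A⁻¹ *ᵥ d'))) := by
  classical
  set U : Matrix (Fin n) (Fin 2) ℝ := Matrix.of fun i k => if k = 0 then d' i else d i with hU
  set V : Matrix (Fin 2) (Fin n) ℝ :=
    Matrix.of fun k j => if k = 0 then s * d' j else -(s * d j) with hV
  have hUV : U * V = s • Matrix.vecMulVec d' d' - s • Matrix.vecMulVec d d := by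
    ext i j
    simp only [hU, hV, Matrix.mul_apply, Fin.sum_univ_two, Matrix.of_apply,
      Matrix.sub_apply, Matrix.smul_apply, Matrix.vecMulVec_apply, smul_eq_mul]
    norm_num
    ring
  have hsplit : A + s • Matrix.vecMulVec d' d' - s • Matrix.vecMulVec d d
      = A * (1 + (A⁻¹ * U) * V) := by
    rw [Matrix.mul_add, Matrix.mul_one, ← Matrix.mul_assoc, ← Matrix.mul_assoc,
      Matrix.mul_nonsing_inv _ hA, Matrix.one_mul, hUV, add_sub_assoc]
  rw [hsplit, Matrix.det_mul, Matrix.det_one_add_mul_comm]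
  congr 1
  have e00 : (V * (A⁻¹ * U)) 0 0 = s * (d' ⬝ᵥ A⁻¹ *ᵥ d') := by
    simp only [hU, hV, Matrix.mul_apply, Matrix.of_apply, Matrix.mulVec, dotProduct,
      Finset.mul_sum]
    norm_num
    refine Finset.sum_congr rfl fun x _ => ?_
    refine Finset.sum_congr rfl fun y _ => ?_
    ring
  have e01 : (V * (A⁻¹ * U)) 0 1 = s * (d' ⬝ᵥ A⁻¹ *ᵥ d) := by
    simp only [hU, hV, Matrix.mul_apply, Matrix.of_apply, Matrix.mulVec, dotProduct,
      Finset.mul_sum]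
    norm_num
    refine Finset.sum_congr rfl fun x _ => ?_
    refine Finset.sum_congr rfl fun y _ => ?_
    ring
  have e10 : (V * (A⁻¹ * U)) 1 0 = -(s * (d ⬝ᵥ A⁻¹ *ᵥ d')) := by
    simp only [hU, hV, Matrix.mul_apply, Matrix.of_apply, Matrix.mulVec, dotProduct,
      Finset.mul_sum]
    norm_num
    refine Finset.sum_congr rfl fun x _ => ?_
    refine Finset.sum_congr rfl fun y _ => ?_
    ring
  have e11 : (V * (A⁻¹ * U)) 1 1 = -(s * (d ⬝ᵥ A⁻¹ *ᵥ d)) := by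
    simp only [hU, hV, Matrix.mul_apply, Matrix.of_apply, Matrix.mulVec, dotProduct,
      Finset.mul_sum]
    norm_num
    refine Finset.sum_congr rfl fun x _ => ?_
    refine Finset.sum_congr rfl fun y _ => ?_
    ring
  rw [Matrix.det_fin_two]
  simp only [Matrix.add_apply, Matrix.one_apply, e00, e01, e10, e11]
  norm_num
  ring

variable {n : ℕ}

lemma dot_mulVec_eq (M : Matrix (Fin n) (Fin n) ℝ) (x y : Fin n → ℝ) :
    x ⬝ᵥ (M *ᵥ y) = (Mᵀ *ᵥ x) ⬝ᵥ y := by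
  simp only [dotProduct, Matrix.mulVec, Matrix.transpose_apply, Finset.mul_sum, Finset.sum_mul]
  rw [Finset.sum_comm]
  apply Finset.sum_congr rfl; intro i _
  apply Finset.sum_congr rfl; intro j _
  ring

lemma dot_mulVec_symm {M : Matrix (Fin n) (Fin n) ℝ} (hM : Mᵀ = M) (x y : Fin n → ℝ) :
    x ⬝ᵥ (M *ᵥ y) = y ⬝ᵥ (M *ᵥ x) := by
  rw [dot_mulVec_eq, hM, dotProduct_comm]

lemma le_of_det_max {A : Matrix (Fin n) (Fin n) ℝ} (hA : IsUnit A.det) (hdet : 0 < A.det)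
    (d d' : Fin n → ℝ) (s₀ : ℝ) (hs₀ : 0 < s₀)
    (hmax : ∀ s : ℝ, 0 < s → s ≤ s₀ →
      (A + s • Matrix.vecMulVec d' d' - s • Matrix.vecMulVec d d).det ≤ A.det) :
    d' ⬝ᵥ A⁻¹ *ᵥ d' ≤ d ⬝ᵥ A⁻¹ *ᵥ d := by
  by_contra hcon
  push_neg at hcon
  set R := d ⬝ᵥ A⁻¹ *ᵥ d with hR
  set R' := d' ⬝ᵥ A⁻¹ *ᵥ d' with hR'
  set p := (d' ⬝ᵥ A⁻¹ *ᵥ d) * (d ⬝ᵥ A⁻¹ *ᵥ d') with hp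
  set B : ℝ := |R * R' - p| + 1 with hB
  have hBpos : 0 < B := by positivity
  have h5 : R * R' - p ≤ B := by
    have := le_abs_self (R * R' - p); linarith
  have hRR : 0 < R' - R := by linarith
  set s : ℝ := min s₀ ((R' - R) / (2 * B)) with hs
  have hspos : 0 < s := lt_min hs₀ (by positivity)
  have h6 : s ≤ (R' - R) / (2 * B) := min_le_right _ _
  have h1 := hmax s hspos (min_le_left _ _)
  rw [det_rank_two_update A hA d d' s] at h1
  clear_value R R' p
  rw [← hR, ← hR', ← hp] at h1
  clear hR hR' hp
  clear_value B s
  clear hB hs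
  have h2 : (1 + s * R') * (1 - s * R) + s^2 * p ≤ 1 := by
    refine le_of_mul_le_mul_left ?_ hdet
    rw [mul_one]
    exact h1
  have h3 : s * (R' - R) ≤ s * (s * (R * R' - p)) := by nlinarith [h2]
  have h4 : R' - R ≤ s * (R * R' - p) := le_of_mul_le_mul_left h3 hspos
  have h7 : s * (R * R' - p) ≤ s * B := by
    apply mul_le_mul_of_nonneg_left h5 hspos.le
  have h8 : s * B ≤ ((R' - R) / (2 * B)) * B := mul_le_mul_of_nonneg_right h6 hBpos.le
  have h9 : ((R' - R) / (2 * B)) * B = (R' - R) / 2 := by field_simp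
  linarith

lemma quad_bound {A : Matrix (Fin n) (Fin n) ℝ} (hA : IsUnit A.det) (hAs : Aᵀ = A)
    (hpsd : ∀ y : Fin n → ℝ, 0 ≤ y ⬝ᵥ (A *ᵥ y)) (d x : Fin n → ℝ) :
    2 * (d ⬝ᵥ x) - x ⬝ᵥ (A *ᵥ x) ≤ d ⬝ᵥ (A⁻¹ *ᵥ d) := by
  have hrec : A *ᵥ (A⁻¹ *ᵥ d) = d := by
    rw [Matrix.mulVec_mulVec, Matrix.mul_nonsing_inv _ hA, Matrix.one_mulVec]
  have h := hpsd (x - A⁻¹ *ᵥ d)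
  rw [Matrix.mulVec_sub, hrec, sub_dotProduct, dotProduct_sub,
    dotProduct_sub] at h
  have e1 : (A⁻¹ *ᵥ d) ⬝ᵥ (A *ᵥ x) = x ⬝ᵥ d := by
    rw [← dot_mulVec_symm hAs, hrec]
  have e2 : (A⁻¹ *ᵥ d) ⬝ᵥ d = d ⬝ᵥ (A⁻¹ *ᵥ d) := dotProduct_comm _ _
  have e3 : x ⬝ᵥ d = d ⬝ᵥ x := dotProduct_comm _ _
  linarith

lemma inv_psd {A : Matrix (Fin n) (Fin n) ℝ} (hA : IsUnit A.det) (hAs : Aᵀ = A)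
    (hpsd : ∀ y : Fin n → ℝ, 0 ≤ y ⬝ᵥ (A *ᵥ y)) (y : Fin n → ℝ) :
    0 ≤ y ⬝ᵥ (A⁻¹ *ᵥ y) := by
  have hrec : A *ᵥ (A⁻¹ *ᵥ y) = y := by
    rw [Matrix.mulVec_mulVec, Matrix.mul_nonsing_inv _ hA, Matrix.one_mulVec]
  have h := hpsd (A⁻¹ *ᵥ y)
  rw [hrec] at h
  rwa [dotProduct_comm]

noncomputable def onesMat (n : ℕ) : Matrix (Fin n) (Fin n) ℝ :=
  Matrix.vecMulVec (fun _ => 1) (fun _ => 1)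

noncomputable def Amat {n : ℕ} (E : Finset (Finset (Fin n)))
    (c : Finset (Fin n) → Sym2 (Fin n) → ℝ) (ε : ℝ) : Matrix (Fin n) (Fin n) ℝ :=
  lapU E c + ε • (1 : Matrix (Fin n) (Fin n) ℝ) + onesMat n

variable {n : ℕ} {E : Finset (Finset (Fin n))} {c : Finset (Fin n) → Sym2 (Fin n) → ℝ} {ε : ℝ}

lemma onesMat_transpose : (onesMat n)ᵀ = onesMat n := by
  ext a b; simp [onesMat, Matrix.vecMulVec_apply]

lemma quad_onesMat (x : Fin n → ℝ) :
    x ⬝ᵥ (onesMat n *ᵥ x) = ((fun _ => (1:ℝ)) ⬝ᵥ x)^2 := by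
  rw [onesMat, vecMulVec_mulVec', dotProduct_smul, smul_eq_mul, sq]
  rw [show (x ⬝ᵥ fun _ => (1:ℝ)) = ((fun _ => (1:ℝ)) ⬝ᵥ x) from dotProduct_comm _ _]

lemma quad_smul_one (x : Fin n → ℝ) :
    x ⬝ᵥ ((ε • (1 : Matrix (Fin n) (Fin n) ℝ)) *ᵥ x) = ε * (x ⬝ᵥ x) := by
  rw [Matrix.smul_mulVec, Matrix.one_mulVec, dotProduct_smul, smul_eq_mul]

lemma Amat_transpose : (Amat E c ε)ᵀ = Amat E c ε := by
  unfold Amat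
  rw [Matrix.transpose_add, Matrix.transpose_add, lapU_transpose, Matrix.transpose_smul,
    Matrix.transpose_one, onesMat_transpose]

lemma quad_Amat (x : Fin n → ℝ) :
    x ⬝ᵥ (Amat E c ε *ᵥ x) = x ⬝ᵥ (lapU E c *ᵥ x) + ε * (x ⬝ᵥ x)
      + ((fun _ => (1:ℝ)) ⬝ᵥ x)^2 := by
  unfold Amat
  rw [Matrix.add_mulVec, Matrix.add_mulVec, dotProduct_add, dotProduct_add,
    quad_smul_one, quad_onesMat]

lemma dotProduct_self_pos {x : Fin n → ℝ} (hx : x ≠ 0) : 0 < x ⬝ᵥ x := by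
  have hne : ∃ i, x i ≠ 0 := by
    by_contra h
    push_neg at h
    exact hx (funext h)
  obtain ⟨i, hi⟩ := hne
  apply Finset.sum_pos' (fun j _ => mul_self_nonneg (x j))
  exact ⟨i, Finset.mem_univ i, mul_self_pos.mpr hi⟩

lemma Amat_posdef (hc : ∀ e ∈ E, ∀ f ∈ pairs e, 0 ≤ c e f) (hε : 0 < ε) :
    (Amat E c ε).PosDef := by
  rw [Matrix.posDef_iff_dotProduct_mulVec]
  constructor
  · rw [Matrix.IsHermitian, Matrix.conjTranspose_eq_transpose_of_trivial, Amat_transpose]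
  · intro x hx
    have hsx : star x = x := by
      funext i; simp
    rw [hsx, quad_Amat]
    have h1 := quad_lapU_nonneg hc x
    have h2 := dotProduct_self_pos hx
    have h3 : 0 ≤ ((fun _ => (1:ℝ)) ⬝ᵥ x)^2 := sq_nonneg _
    nlinarith [mul_pos hε h2]

lemma Amat_det_pos (hc : ∀ e ∈ E, ∀ f ∈ pairs e, 0 ≤ c e f) (hε : 0 < ε) :
    0 < (Amat E c ε).det := (Amat_posdef hc hε).det_pos

lemma Amat_isUnit (hc : ∀ e ∈ E, ∀ f ∈ pairs e, 0 ≤ c e f) (hε : 0 < ε) :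
    IsUnit (Amat E c ε).det := (Amat_det_pos hc hε).ne'.isUnit

lemma quad_Amat_nonneg (hc : ∀ e ∈ E, ∀ f ∈ pairs e, 0 ≤ c e f) (hε : 0 < ε)
    (x : Fin n → ℝ) : 0 ≤ x ⬝ᵥ (Amat E c ε *ᵥ x) := by
  rw [quad_Amat]
  have h1 := quad_lapU_nonneg hc x
  have h2 : 0 ≤ x ⬝ᵥ x := by
    rcases eq_or_ne x 0 with rfl | hx
    · simp
    · exact (dotProduct_self_pos hx).le
  have h3 : 0 ≤ ((fun _ => (1:ℝ)) ⬝ᵥ x)^2 := sq_nonneg _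
  nlinarith

lemma res_Amat_inv_nonneg (hc : ∀ e ∈ E, ∀ f ∈ pairs e, 0 ≤ c e f) (hε : 0 < ε)
    (f : Sym2 (Fin n)) : 0 ≤ res (Amat E c ε)⁻¹ f := by
  induction f using Sym2.ind with
  | _ i j =>
    rw [res_mk]
    exact inv_psd (Amat_isUnit hc hε) Amat_transpose (quad_Amat_nonneg hc hε) _

variable {n : ℕ}

lemma sum_sum_ite {β : Type*} [AddCommMonoid β] (E : Finset (Finset (Fin n)))
    {e : Finset (Fin n)} (he : e ∈ E) {f₀ : Sym2 (Fin n)} (hf₀ : f₀ ∈ pairs e)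
    (g : Sym2 (Fin n) → β) :
    ∑ e₁ ∈ E, ∑ f₁ ∈ pairs e₁, (if e₁ = e ∧ f₁ = f₀ then g f₁ else 0) = g f₀ := by
  classical
  have h : ∀ e₁ ∈ E, ∑ f₁ ∈ pairs e₁, (if e₁ = e ∧ f₁ = f₀ then g f₁ else 0)
      = if e₁ = e then g f₀ else 0 := by
    intro e₁ _
    by_cases h : e₁ = e
    · subst h
      rw [if_pos rfl]
      have : ∀ f₁, (if e₁ = e₁ ∧ f₁ = f₀ then g f₁ else 0) = if f₁ = f₀ then g f₁ else 0 := by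
        intro f₁; by_cases hf : f₁ = f₀ <;> simp [hf]
      rw [Finset.sum_congr rfl fun f₁ _ => this f₁]
      rw [Finset.sum_ite_eq' (pairs e₁) f₀ g, if_pos hf₀]
    · rw [if_neg h]
      apply Finset.sum_eq_zero
      intro f₁ _
      rw [if_neg (by tauto)]
  rw [Finset.sum_congr rfl h, Finset.sum_ite_eq' E e, if_pos he]

lemma lapU_perturb {E : Finset (Finset (Fin n))} {c : Finset (Fin n) → Sym2 (Fin n) → ℝ}
    {e : Finset (Fin n)} (he : e ∈ E) {f f' : Sym2 (Fin n)} (hf : f ∈ pairs e)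
    (hf' : f' ∈ pairs e) (s : ℝ) :
    lapU E (fun e₁ f₁ =>
        c e₁ f₁ + (if e₁ = e ∧ f₁ = f' then s else 0) - (if e₁ = e ∧ f₁ = f then s else 0))
      = lapU E c + s • edgeMat f' - s • edgeMat f := by
  classical
  unfold lapU
  have hsummand : ∀ e₁ f₁,
      (c e₁ f₁ + (if e₁ = e ∧ f₁ = f' then s else 0)
        - (if e₁ = e ∧ f₁ = f then s else 0)) • edgeMat f₁
      = c e₁ f₁ • edgeMat f₁ + (if e₁ = e ∧ f₁ = f' then s • edgeMat f₁ else 0)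
        - (if e₁ = e ∧ f₁ = f then s • edgeMat f₁ else 0) := by
    intro e₁ f₁
    rw [sub_smul, add_smul, ite_smul, ite_smul]
    simp
  calc ∑ e₁ ∈ E, ∑ f₁ ∈ pairs e₁,
        (c e₁ f₁ + (if e₁ = e ∧ f₁ = f' then s else 0)
          - (if e₁ = e ∧ f₁ = f then s else 0)) • edgeMat f₁
      = ∑ e₁ ∈ E, ((∑ f₁ ∈ pairs e₁, c e₁ f₁ • edgeMat f₁)
          + (∑ f₁ ∈ pairs e₁, if e₁ = e ∧ f₁ = f' then s • edgeMat f₁ else 0)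
          - (∑ f₁ ∈ pairs e₁, if e₁ = e ∧ f₁ = f then s • edgeMat f₁ else 0)) := by
        refine Finset.sum_congr rfl fun e₁ _ => ?_
        rw [Finset.sum_congr rfl fun f₁ _ => hsummand e₁ f₁, Finset.sum_sub_distrib,
          Finset.sum_add_distrib]
    _ = (∑ e₁ ∈ E, ∑ f₁ ∈ pairs e₁, c e₁ f₁ • edgeMat f₁) + s • edgeMat f' - s • edgeMat f := by
        rw [Finset.sum_sub_distrib, Finset.sum_add_distrib,
          sum_sum_ite E he hf' (fun f₁ => s • edgeMat f₁),
          sum_sum_ite E he hf (fun f₁ => s • edgeMat f₁)]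

lemma keval_cont (e : Finset (Fin n)) (f : Sym2 (Fin n)) :
    Continuous fun c : Finset (Fin n) → Sym2 (Fin n) → ℝ => c e f :=
  (continuous_apply f).comp (continuous_apply e)

lemma feasible_compact (E : Finset (Finset (Fin n))) (w : Finset (Fin n) → ℝ)
    (hw : ∀ e ∈ E, 0 < w e) :
    IsCompact {c : Finset (Fin n) → Sym2 (Fin n) → ℝ |
      (∀ e f, 0 ≤ c e f) ∧ (∀ e f, ¬(e ∈ E ∧ f ∈ pairs e) → c e f = 0) ∧
      (∀ e ∈ E, ∑ f ∈ pairs e, c e f = w e)} := by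
  classical
  have keval := fun (e : Finset (Fin n)) (f : Sym2 (Fin n)) => keval_cont (n := n) e f
  have hclosed : IsClosed {c : Finset (Fin n) → Sym2 (Fin n) → ℝ |
      (∀ e f, 0 ≤ c e f) ∧ (∀ e f, ¬(e ∈ E ∧ f ∈ pairs e) → c e f = 0) ∧
      (∀ e ∈ E, ∑ f ∈ pairs e, c e f = w e)} := by
    have h1 : IsClosed {c : Finset (Fin n) → Sym2 (Fin n) → ℝ | ∀ e f, 0 ≤ c e f} := by
      rw [Set.setOf_forall]
      refine isClosed_iInter fun e => ?_
      rw [Set.setOf_forall]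
      refine isClosed_iInter fun f => ?_
      exact isClosed_le continuous_const (keval e f)
    have h2 : IsClosed {c : Finset (Fin n) → Sym2 (Fin n) → ℝ |
        ∀ e f, ¬(e ∈ E ∧ f ∈ pairs e) → c e f = 0} := by
      rw [Set.setOf_forall]
      refine isClosed_iInter fun e => ?_
      rw [Set.setOf_forall]
      refine isClosed_iInter fun f => ?_
      by_cases h : e ∈ E ∧ f ∈ pairs e
      · have : {c : Finset (Fin n) → Sym2 (Fin n) → ℝ | ¬(e ∈ E ∧ f ∈ pairs e) → c e f = 0}
            = Set.univ := by
          ext c; simp [h]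
        rw [this]; exact isClosed_univ
      · have : {c : Finset (Fin n) → Sym2 (Fin n) → ℝ | ¬(e ∈ E ∧ f ∈ pairs e) → c e f = 0}
            = {c | c e f = 0} := by
          ext c; simp [h]
        rw [this]; exact isClosed_eq (keval e f) continuous_const
    have h3 : IsClosed {c : Finset (Fin n) → Sym2 (Fin n) → ℝ |
        ∀ e ∈ E, ∑ f ∈ pairs e, c e f = w e} := by
      rw [Set.setOf_forall]
      refine isClosed_iInter fun e => ?_
      by_cases h : e ∈ E
      · have : {c : Finset (Fin n) → Sym2 (Fin n) → ℝ | e ∈ E → ∑ f ∈ pairs e, c e f = w e}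
            = {c | ∑ f ∈ pairs e, c e f = w e} := by
          ext c; simp [h]
        rw [this]
        exact isClosed_eq (continuous_finset_sum _ fun f _ => keval e f) continuous_const
      · have : {c : Finset (Fin n) → Sym2 (Fin n) → ℝ | e ∈ E → ∑ f ∈ pairs e, c e f = w e}
            = Set.univ := by
          ext c; simp [h]
        rw [this]; exact isClosed_univ
    have heq : {c : Finset (Fin n) → Sym2 (Fin n) → ℝ |
        (∀ e f, 0 ≤ c e f) ∧ (∀ e f, ¬(e ∈ E ∧ f ∈ pairs e) → c e f = 0) ∧
        (∀ e ∈ E, ∑ f ∈ pairs e, c e f = w e)}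
        = {c : Finset (Fin n) → Sym2 (Fin n) → ℝ | ∀ e f, 0 ≤ c e f}
        ∩ ({c | ∀ e f, ¬(e ∈ E ∧ f ∈ pairs e) → c e f = 0}
          ∩ {c | ∀ e ∈ E, ∑ f ∈ pairs e, c e f = w e}) := by
      ext c
      simp only [Set.mem_setOf_eq, Set.mem_inter_iff]
    rw [heq]
    exact h1.inter (h2.inter h3)
  have hWnonneg : 0 ≤ ∑ e ∈ E, w e := Finset.sum_nonneg fun e he => (hw e he).le
  have hsub : {c : Finset (Fin n) → Sym2 (Fin n) → ℝ |
      (∀ e f, 0 ≤ c e f) ∧ (∀ e f, ¬(e ∈ E ∧ f ∈ pairs e) → c e f = 0) ∧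
      (∀ e ∈ E, ∑ f ∈ pairs e, c e f = w e)} ⊆ Set.univ.pi
      (fun _ : Finset (Fin n) => Set.univ.pi fun _ : Sym2 (Fin n) =>
        Set.Icc (0:ℝ) (∑ e ∈ E, w e)) := by
    intro c hc
    obtain ⟨hnn, hz, hsum⟩ := hc
    rw [Set.mem_univ_pi]
    intro e
    rw [Set.mem_univ_pi]
    intro f
    refine ⟨hnn e f, ?_⟩
    by_cases hef : e ∈ E ∧ f ∈ pairs e
    · have h1 : c e f ≤ ∑ f' ∈ pairs e, c e f' :=
        Finset.single_le_sum (fun f' _ => hnn e f') hef.2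
      rw [hsum e hef.1] at h1
      exact h1.trans (Finset.single_le_sum (fun e' he' => (hw e' he').le) hef.1)
    · rw [hz e f hef]; exact hWnonneg
  exact (isCompact_univ_pi fun _ => isCompact_univ_pi fun _ => isCompact_Icc).of_isClosed_subset
    hclosed hsub


lemma exists_opt_c (E : Finset (Finset (Fin n))) (w : Finset (Fin n) → ℝ)
    (hcard : ∀ e ∈ E, 2 ≤ e.card) (hw : ∀ e ∈ E, 0 < w e) {ε : ℝ} (hε : 0 < ε) :
    ∃ c : Finset (Fin n) → Sym2 (Fin n) → ℝ,
      (∀ e f, 0 ≤ c e f) ∧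
      (∀ e f, ¬(e ∈ E ∧ f ∈ pairs e) → c e f = 0) ∧
      (∀ e ∈ E, ∑ f ∈ pairs e, c e f = w e) ∧
      (∑ e ∈ E, ∑ f ∈ pairs e, c e f * res (Amat E c ε)⁻¹ f ≤ (n : ℝ)) ∧
      (∀ e ∈ E, ∀ f' ∈ pairs e, w e * res (Amat E c ε)⁻¹ f'
          ≤ ∑ f ∈ pairs e, c e f * res (Amat E c ε)⁻¹ f) := by
  classical
  set S : Set (Finset (Fin n) → Sym2 (Fin n) → ℝ) :=
    {c | (∀ e f, 0 ≤ c e f) ∧ (∀ e f, ¬(e ∈ E ∧ f ∈ pairs e) → c e f = 0) ∧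
         (∀ e ∈ E, ∑ f ∈ pairs e, c e f = w e)} with hSdef
  have keval : ∀ (e : Finset (Fin n)) (f : Sym2 (Fin n)),
      Continuous fun c : Finset (Fin n) → Sym2 (Fin n) → ℝ => c e f :=
    fun e f => keval_cont e f
  have hScomp : IsCompact S := feasible_compact E w hw
  -- nonemptiness
  have hpairs : ∀ e ∈ E, (pairs e).Nonempty := by
    intro e he
    have h2 := hcard e he
    obtain ⟨a, ha, b, hb, hab⟩ := Finset.one_lt_card.mp (by omega : 1 < e.card)
    exact ⟨s(a,b), mem_pairs.mpr ⟨ha, hb, hab⟩⟩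
  have hSne : S.Nonempty := by
    refine ⟨fun e f => if e ∈ E ∧ f ∈ pairs e then w e / (pairs e).card else 0, ?_, ?_, ?_⟩
    · intro e f
      dsimp only
      by_cases h : e ∈ E ∧ f ∈ pairs e
      · rw [if_pos h]; exact div_nonneg (hw e h.1).le (Nat.cast_nonneg _)
      · rw [if_neg h]
    · intro e f h
      dsimp only
      rw [if_neg h]
    · intro e he
      dsimp only
      have hcardp : 0 < ((pairs e).card : ℝ) := by
        exact_mod_cast Finset.card_pos.mpr (hpairs e he)
      rw [Finset.sum_congr rfl (fun f hf => if_pos ⟨he, hf⟩), Finset.sum_const, nsmul_eq_mul]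
      field_simp
  -- continuity of the objective
  have hlapent : ∀ i j, Continuous fun c : Finset (Fin n) → Sym2 (Fin n) → ℝ => lapU E c i j := by
    intro i j
    have : (fun c : Finset (Fin n) → Sym2 (Fin n) → ℝ => lapU E c i j)
        = fun c => ∑ e ∈ E, ∑ f ∈ pairs e, c e f * edgeMat f i j := by
      funext c
      simp [lapU, Matrix.sum_apply, Matrix.smul_apply, smul_eq_mul]
    rw [this]
    exact continuous_finset_sum _ fun e _ =>
      continuous_finset_sum _ fun f _ => (keval e f).mul continuous_const
  have hcontA : Continuous fun c : Finset (Fin n) → Sym2 (Fin n) → ℝ => Amat E c ε := by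
    apply continuous_matrix
    intro i j
    have : (fun c : Finset (Fin n) → Sym2 (Fin n) → ℝ => Amat E c ε i j)
        = fun c => lapU E c i j
            + ((ε • (1 : Matrix (Fin n) (Fin n) ℝ)) i j + onesMat n i j) := by
      funext c
      simp [Amat, Matrix.add_apply, add_assoc]
    rw [this]
    exact (hlapent i j).add continuous_const
  have hPhi : Continuous fun c : Finset (Fin n) → Sym2 (Fin n) → ℝ => (Amat E c ε).det :=
    hcontA.matrix_det
  obtain ⟨c, hcS, hcmax⟩ := hScomp.exists_isMaxOn hSne hPhi.continuousOn
  obtain ⟨hnn, hout, hsum⟩ := hcS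
  have hcnn : ∀ e ∈ E, ∀ f ∈ pairs e, 0 ≤ c e f := fun e _ f _ => hnn e f
  have hunit : IsUnit (Amat E c ε).det := Amat_isUnit hcnn hε
  have hdetpos : 0 < (Amat E c ε).det := Amat_det_pos hcnn hε
  -- optimality of the maximizer
  have hopt : ∀ e ∈ E, ∀ f ∈ pairs e, ∀ f' ∈ pairs e, 0 < c e f →
      res (Amat E c ε)⁻¹ f' ≤ res (Amat E c ε)⁻¹ f := by
    intro e he f hf f' hf' hpos
    rcases eq_or_ne f' f with rfl | hne
    · exact le_refl _
    have hmax' : ∀ s : ℝ, 0 < s → s ≤ c e f →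
        (Amat E c ε + s • edgeMat f' - s • edgeMat f).det ≤ (Amat E c ε).det := by
      intro s hs hsle
      set c' : Finset (Fin n) → Sym2 (Fin n) → ℝ := fun e₁ f₁ =>
        c e₁ f₁ + (if e₁ = e ∧ f₁ = f' then s else 0)
          - (if e₁ = e ∧ f₁ = f then s else 0) with hc'
      have hc'S : c' ∈ S := by
        refine ⟨?_, ?_, ?_⟩
        · intro e₁ f₁
          by_cases h1 : e₁ = e ∧ f₁ = f'
          · have h2 : ¬(e₁ = e ∧ f₁ = f) := by
              rintro ⟨_, hh⟩
              exact hne (h1.2 ▸ hh)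
            simp only [hc', if_pos h1, if_neg h2]
            have := hnn e₁ f₁
            linarith
          · by_cases h2 : e₁ = e ∧ f₁ = f
            · simp only [hc', if_neg h1, if_pos h2]
              have : c e₁ f₁ = c e f := by rw [h2.1, h2.2]
              linarith
            · simp only [hc', if_neg h1, if_neg h2]
              have := hnn e₁ f₁
              linarith
        · intro e₁ f₁ h
          have hne1 : ¬(e₁ = e ∧ f₁ = f') := by rintro ⟨rfl, rfl⟩; exact h ⟨he, hf'⟩
          have hne2 : ¬(e₁ = e ∧ f₁ = f) := by rintro ⟨rfl, rfl⟩; exact h ⟨he, hf⟩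
          simp only [hc', if_neg hne1, if_neg hne2, hout e₁ f₁ h]
          ring
        · intro e₁ he₁
          have h1 : ∑ f₁ ∈ pairs e₁, (if e₁ = e ∧ f₁ = f' then s else 0)
              = if e₁ = e then s else 0 := by
            by_cases h : e₁ = e
            · subst h
              rw [if_pos rfl]
              have heq : ∀ f₁, (if e₁ = e₁ ∧ f₁ = f' then s else 0)
                  = if f₁ = f' then s else 0 := by
                intro f₁; by_cases hh : f₁ = f' <;> simp [hh]
              rw [Finset.sum_congr rfl fun f₁ _ => heq f₁,
                Finset.sum_ite_eq' (pairs e₁) f' (fun _ => s), if_pos hf']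
            · rw [if_neg h]
              apply Finset.sum_eq_zero
              intro f₁ _
              rw [if_neg (by tauto)]
          have h2 : ∑ f₁ ∈ pairs e₁, (if e₁ = e ∧ f₁ = f then s else 0)
              = if e₁ = e then s else 0 := by
            by_cases h : e₁ = e
            · subst h
              rw [if_pos rfl]
              have heq : ∀ f₁, (if e₁ = e₁ ∧ f₁ = f then s else 0)
                  = if f₁ = f then s else 0 := by
                intro f₁; by_cases hh : f₁ = f <;> simp [hh]
              rw [Finset.sum_congr rfl fun f₁ _ => heq f₁,
                Finset.sum_ite_eq' (pairs e₁) f (fun _ => s), if_pos hf]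
            · rw [if_neg h]
              apply Finset.sum_eq_zero
              intro f₁ _
              rw [if_neg (by tauto)]
          simp only [hc']
          rw [Finset.sum_sub_distrib, Finset.sum_add_distrib, h1, h2, hsum e₁ he₁]
          ring
      have hAc' : Amat E c' ε = Amat E c ε + s • edgeMat f' - s • edgeMat f := by
        unfold Amat
        rw [hc', lapU_perturb he hf hf' s]
        abel
      have hle := hcmax hc'S
      simp only [Set.mem_setOf_eq] at hle
      rw [hAc'] at hle
      exact hle
    revert hmax'
    induction f, f' using Sym2.inductionOn₂ with
    | _ i j i' j' =>
      intro hmax'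
      rw [res_mk, res_mk]
      apply le_of_det_max hunit hdetpos (dvec i j) (dvec i' j') (c e s(i,j)) hpos
      intro s hs hsle
      have := hmax' s hs hsle
      rwa [edgeMat_mk, edgeMat_mk] at this
  -- trace identity and bound
  have hres_trace : ∀ f : Sym2 (Fin n),
      Matrix.trace ((Amat E c ε)⁻¹ * edgeMat f) = res (Amat E c ε)⁻¹ f := by
    intro f
    induction f using Sym2.ind with
    | _ i j => rw [edgeMat_mk, trace_mul_vecMulVec, res_mk]
  have hkey : ∑ e ∈ E, ∑ f ∈ pairs e, c e f * res (Amat E c ε)⁻¹ f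
      = Matrix.trace ((Amat E c ε)⁻¹ * lapU E c) := by
    unfold lapU
    rw [Matrix.mul_sum, Matrix.trace_sum]
    refine Finset.sum_congr rfl fun e _ => ?_
    rw [Matrix.mul_sum, Matrix.trace_sum]
    refine Finset.sum_congr rfl fun f _ => ?_
    rw [Matrix.mul_smul, Matrix.trace_smul, hres_trace, smul_eq_mul]
  have hlapeq : lapU E c = Amat E c ε - ε • (1 : Matrix (Fin n) (Fin n) ℝ) - onesMat n := by
    unfold Amat; abel
  have htrA : Matrix.trace ((Amat E c ε)⁻¹ * Amat E c ε) = (n : ℝ) := by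
    rw [Matrix.nonsing_inv_mul _ hunit, Matrix.trace_one]
    simp
  have htrinv : 0 ≤ Matrix.trace (Amat E c ε)⁻¹ := by
    unfold Matrix.trace
    apply Finset.sum_nonneg
    intro i _
    have hdiag : (Amat E c ε)⁻¹.diag i
        = Pi.single i 1 ⬝ᵥ ((Amat E c ε)⁻¹ *ᵥ Pi.single i 1) := by
      simp [Matrix.diag_apply, Matrix.mulVec_single, single_dotProduct]
    rw [hdiag]
    exact inv_psd hunit Amat_transpose (quad_Amat_nonneg hcnn hε) _
  have htrones : 0 ≤ Matrix.trace ((Amat E c ε)⁻¹ * onesMat n) := by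
    rw [onesMat, trace_mul_vecMulVec]
    exact inv_psd hunit Amat_transpose (quad_Amat_nonneg hcnn hε) _
  have htr : Matrix.trace ((Amat E c ε)⁻¹ * lapU E c)
      = (n : ℝ) - ε * Matrix.trace (Amat E c ε)⁻¹
        - Matrix.trace ((Amat E c ε)⁻¹ * onesMat n) := by
    rw [hlapeq, Matrix.mul_sub, Matrix.mul_sub, Matrix.trace_sub, Matrix.trace_sub, htrA,
      Matrix.mul_smul, Matrix.trace_smul, Matrix.mul_one, smul_eq_mul]
  refine ⟨c, hnn, hout, hsum, ?_, ?_⟩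
  · rw [hkey, htr]
    have := mul_nonneg hε.le htrinv
    linarith
  · intro e he f' hf'
    have h1 : w e * res (Amat E c ε)⁻¹ f'
        = ∑ f ∈ pairs e, c e f * res (Amat E c ε)⁻¹ f' := by
      rw [← Finset.sum_mul, hsum e he]
    rw [h1]
    apply Finset.sum_le_sum
    intro f hf
    rcases eq_or_lt_of_le (hnn e f) with h0 | hpos
    · rw [← h0]; simp
    · exact mul_le_mul_of_nonneg_left (hopt e he f hf f' hf' hpos) hpos.le

lemma exists_isMP_symm {n : ℕ} (A : Matrix (Fin n) (Fin n) ℝ) (hA : Aᵀ = A) :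
    ∃ M, IsMP A M ∧ Mᵀ = M := by
  have hH : A.IsHermitian := by
    rwa [Matrix.IsHermitian, Matrix.conjTranspose_eq_transpose_of_trivial]
  set V : Matrix (Fin n) (Fin n) ℝ := (hH.eigenvectorUnitary : Matrix (Fin n) (Fin n) ℝ)
  have hVmem := (hH.eigenvectorUnitary).2
  have hV1 : star V * V = 1 := (Matrix.mem_unitaryGroup_iff'.mp hVmem)
  have hV2 : V * star V = 1 := (Matrix.mem_unitaryGroup_iff.mp hVmem)
  have hid : (RCLike.ofReal ∘ hH.eigenvalues : Fin n → ℝ) = hH.eigenvalues := by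
    funext i; simp
  set D : Matrix (Fin n) (Fin n) ℝ := diagonal hH.eigenvalues with hD
  set Dp : Matrix (Fin n) (Fin n) ℝ := diagonal (fun i => (hH.eigenvalues i)⁻¹) with hDp
  have hspec : A = V * D * star V := by
    have := hH.spectral_theorem
    rwa [hid] at this
  have hDDpD : D * Dp * D = D := by
    rw [hD, hDp, diagonal_mul_diagonal, diagonal_mul_diagonal]
    have : (fun i => hH.eigenvalues i * (hH.eigenvalues i)⁻¹ * hH.eigenvalues i)
        = hH.eigenvalues := by
      funext i
      rcases eq_or_ne (hH.eigenvalues i) 0 with h | h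
      · rw [h]; norm_num
      · field_simp
    rw [this]
  have hDpDDp : Dp * D * Dp = Dp := by
    rw [hD, hDp, diagonal_mul_diagonal, diagonal_mul_diagonal]
    have : (fun i => (hH.eigenvalues i)⁻¹ * hH.eigenvalues i * (hH.eigenvalues i)⁻¹)
        = fun i => (hH.eigenvalues i)⁻¹ := by
      funext i
      rcases eq_or_ne (hH.eigenvalues i) 0 with h | h
      · rw [h]; norm_num
      · field_simp
    rw [this]
  have sandwich : ∀ X Y : Matrix (Fin n) (Fin n) ℝ,
      (V * X * star V) * (V * Y * star V) = V * (X * Y) * star V := by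
    intro X Y
    calc (V * X * star V) * (V * Y * star V) = V * X * (star V * V) * Y * star V := by
          noncomm_ring
      _ = V * (X * Y) * star V := by rw [hV1]; noncomm_ring
  have hstar : star V = Vᵀ := by
    rw [Matrix.star_eq_conjTranspose, Matrix.conjTranspose_eq_transpose_of_trivial]
  have hsymm : ∀ X : Matrix (Fin n) (Fin n) ℝ, Xᵀ = X → (V * X * star V)ᵀ = V * X * star V := by
    intro X hX
    calc (V * X * star V)ᵀ = (star V)ᵀ * (Xᵀ * Vᵀ) := by
          rw [Matrix.transpose_mul, Matrix.transpose_mul]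
      _ = V * X * star V := by
          rw [hstar, Matrix.transpose_transpose, hX, ← hstar, Matrix.mul_assoc]
  refine ⟨V * Dp * star V, ⟨?_, ?_, ?_, ?_⟩, ?_⟩
  · rw [hspec, sandwich, sandwich, hDDpD]
  · rw [hspec, sandwich, sandwich, hDpDDp]
  · rw [hspec, sandwich]
    exact hsymm _ (by rw [hD, hDp, diagonal_mul_diagonal, Matrix.diagonal_transpose])
  · rw [hspec, sandwich]
    exact hsymm _ (by rw [hD, hDp, diagonal_mul_diagonal, Matrix.diagonal_transpose])
  · exact hsymm _ (by rw [hDp, Matrix.diagonal_transpose])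

end Aux

open Filter Topology

/-- **Existence of `O(n)`-bounded hyperedge leverage score overestimates.** There is a
universal constant `C > 0` such that every weighted hypergraph with `|V| = n`, rank
`r ≥ 2` and strictly positive weights admits a `(C·n)`-overestimate: a vector
`z ∈ ℝ^E_{≥0}` with `Σ_e z_e ≤ C·n` together with an underlying graph `G` (with
pseudoinverse `Lp` of its Laplacian) such that `z_e ≥ w_e · max_{f ∈ C(e,2)} R_f` for
every `e ∈ E` (stated as `w_e · R_f ≤ z_e` for every pair `f` inside `e`). -/
theorem exists_leverage_score_overestimate :
    ∃ C : ℝ, 0 < C ∧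
      ∀ (n : ℕ) (E : Finset (Finset (Fin n))) (w : Finset (Fin n) → ℝ),
      (∀ e ∈ E, 2 ≤ e.card) → (∀ e ∈ E, 0 < w e) →
      ∀ r : ℕ, 2 ≤ r → E.sup Finset.card = r →
      ∃ z : Finset (Fin n) → ℝ,
        (∀ e ∈ E, 0 ≤ z e) ∧ (∑ e ∈ E, z e) ≤ C * n ∧
        ∃ c : Finset (Fin n) → Sym2 (Fin n) → ℝ,
          (∀ e ∈ E, ∀ f ∈ pairs e, 0 ≤ c e f) ∧
          (∀ e ∈ E, ∑ f ∈ pairs e, c e f = w e) ∧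
          ∃ Lp : Matrix (Fin n) (Fin n) ℝ, IsMP (lapU E c) Lp ∧
            ∀ e ∈ E, ∀ f ∈ pairs e, w e * res Lp f ≤ z e := by
  classical
  refine ⟨1, one_pos, ?_⟩
  intro n E w hcard hw r hr hrank
  -- the sequence of regularization parameters
  set εs : ℕ → ℝ := fun k => 1 / ((k : ℝ) + 1) with hεs
  have hεpos : ∀ k, 0 < εs k := fun k => by positivity
  have Hk : ∀ k : ℕ, ∃ c : Finset (Fin n) → Sym2 (Fin n) → ℝ,
      (∀ e f, 0 ≤ c e f) ∧
      (∀ e f, ¬(e ∈ E ∧ f ∈ pairs e) → c e f = 0) ∧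
      (∀ e ∈ E, ∑ f ∈ pairs e, c e f = w e) ∧
      (∑ e ∈ E, ∑ f ∈ pairs e, c e f * res (Amat E c (εs k))⁻¹ f ≤ (n : ℝ)) ∧
      (∀ e ∈ E, ∀ f' ∈ pairs e, w e * res (Amat E c (εs k))⁻¹ f'
          ≤ ∑ f ∈ pairs e, c e f * res (Amat E c (εs k))⁻¹ f) :=
    fun k => exists_opt_c E w hcard hw (hεpos k)
  choose cs h1 h2 h3 h4 h5 using Hk
  have hcnn : ∀ k, ∀ e ∈ E, ∀ f ∈ pairs e, 0 ≤ cs k e f := fun k e _ f _ => h1 k e f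
  -- the z sequence
  set zk : ℕ → Finset (Fin n) → ℝ := fun k e =>
    if e ∈ E then ∑ f ∈ pairs e, cs k e f * res (Amat E (cs k) (εs k))⁻¹ f else 0 with hzk
  have hz_nonneg : ∀ k e, 0 ≤ zk k e := by
    intro k e
    rw [hzk]
    dsimp only
    by_cases he : e ∈ E
    · rw [if_pos he]
      exact Finset.sum_nonneg fun f hf =>
        mul_nonneg (h1 k e f) (res_Amat_inv_nonneg (hcnn k) (hεpos k) f)
    · rw [if_neg he]
  have hz_sum : ∀ k, ∑ e ∈ E, zk k e ≤ (n : ℝ) := by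
    intro k
    have : ∑ e ∈ E, zk k e
        = ∑ e ∈ E, ∑ f ∈ pairs e, cs k e f * res (Amat E (cs k) (εs k))⁻¹ f := by
      refine Finset.sum_congr rfl fun e he => ?_
      rw [hzk]
      dsimp only
      rw [if_pos he]
    rw [this]
    exact h4 k
  have hz_bound : ∀ k e, zk k e ≤ (n : ℝ) := by
    intro k e
    by_cases he : e ∈ E
    · have h1' : zk k e ≤ ∑ e' ∈ E, zk k e' :=
        Finset.single_le_sum (fun e' _ => hz_nonneg k e') he
      exact h1'.trans (hz_sum k)
    · rw [hzk]; dsimp only; rw [if_neg he]; positivity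
  -- compact container
  set S : Set (Finset (Fin n) → Sym2 (Fin n) → ℝ) :=
    {c | (∀ e f, 0 ≤ c e f) ∧ (∀ e f, ¬(e ∈ E ∧ f ∈ pairs e) → c e f = 0) ∧
         (∀ e ∈ E, ∑ f ∈ pairs e, c e f = w e)} with hSdef
  set Z : Set (Finset (Fin n) → ℝ) :=
    Set.univ.pi fun _ : Finset (Fin n) => Set.Icc (0:ℝ) (n : ℝ) with hZdef
  have hZcomp : IsCompact Z := isCompact_univ_pi fun _ => isCompact_Icc
  have hScomp : IsCompact S := feasible_compact E w hw
  have hTcomp : IsCompact (S ×ˢ Z) := hScomp.prod hZcomp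
  have hmem : ∀ k, (cs k, zk k) ∈ S ×ˢ Z := by
    intro k
    refine ⟨⟨h1 k, h2 k, h3 k⟩, ?_⟩
    rw [hZdef, Set.mem_univ_pi]
    intro e
    exact ⟨hz_nonneg k e, hz_bound k e⟩
  obtain ⟨⟨cstar, zstar⟩, hmemT, φ, hφ, htend⟩ := hTcomp.tendsto_subseq hmem
  obtain ⟨hcstarS, hzstarZ⟩ := hmemT
  obtain ⟨hnn, hout, hsum⟩ := hcstarS
  have hzstar : ∀ e, 0 ≤ zstar e ∧ zstar e ≤ (n : ℝ) := by
    intro e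
    rw [hZdef, Set.mem_univ_pi] at hzstarZ
    exact hzstarZ e
  -- component limits
  have htendc : Tendsto (fun k => cs (φ k)) atTop (𝓝 cstar) :=
    (continuous_fst.tendsto _).comp htend
  have htendz : Tendsto (fun k => zk (φ k)) atTop (𝓝 zstar) :=
    (continuous_snd.tendsto _).comp htend
  have htendze : ∀ e, Tendsto (fun k => zk (φ k) e) atTop (𝓝 (zstar e)) :=
    fun e => ((continuous_apply e).tendsto _).comp htendz
  -- sum bound in the limit
  have hsumz : ∑ e ∈ E, zstar e ≤ (n : ℝ) := by
    have htendsum : Tendsto (fun k => ∑ e ∈ E, zk (φ k) e) atTop (𝓝 (∑ e ∈ E, zstar e)) :=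
      tendsto_finset_sum _ fun e _ => htendze e
    exact le_of_tendsto htendsum (Filter.Eventually.of_forall fun k => hz_sum (φ k))
  -- the pseudoinverse of the limit Laplacian
  obtain ⟨Lp, hMP, hLpsym⟩ := exists_isMP_symm (lapU E cstar) (lapU_transpose E cstar)
  refine ⟨zstar, fun e _ => (hzstar e).1, by rw [one_mul]; exact hsumz, cstar,
    fun e _ f _ => hnn e f, hsum, Lp, hMP, ?_⟩
  intro e he f hf
  revert hf
  induction f using Sym2.ind with
  | _ i j =>
  intro hf
  set d : Fin n → ℝ := dvec i j with hd
  set x₀ : Fin n → ℝ := Lp *ᵥ d with hx₀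
  set L : Matrix (Fin n) (Fin n) ℝ := lapU E cstar with hL
  have hL1 : L *ᵥ (fun _ => (1:ℝ)) = 0 := lapU_mulVec_one E cstar
  have h1x₀ : (fun _ => (1:ℝ)) ⬝ᵥ x₀ = 0 := by
    have hx0eq : x₀ = (Lp * L) *ᵥ (Lp *ᵥ d) := by
      rw [Matrix.mulVec_mulVec, hMP.2.1, hx₀]
    calc (fun _ => (1:ℝ)) ⬝ᵥ x₀ = (fun _ => (1:ℝ)) ⬝ᵥ ((Lp * L) *ᵥ (Lp *ᵥ d)) := by
          rw [← hx0eq]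
      _ = ((Lp * L)ᵀ *ᵥ (fun _ => (1:ℝ))) ⬝ᵥ (Lp *ᵥ d) := dot_mulVec_eq _ _ _
      _ = ((Lp * L) *ᵥ (fun _ => (1:ℝ))) ⬝ᵥ (Lp *ᵥ d) := by rw [hMP.2.2.2]
      _ = (Lp *ᵥ (L *ᵥ (fun _ => (1:ℝ)))) ⬝ᵥ (Lp *ᵥ d) := by rw [Matrix.mulVec_mulVec]
      _ = 0 := by rw [hL1, Matrix.mulVec_zero]; simp
  have hx₀L : x₀ ⬝ᵥ (L *ᵥ x₀) = d ⬝ᵥ x₀ := by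
    calc x₀ ⬝ᵥ (L *ᵥ x₀) = (Lpᵀ *ᵥ d) ⬝ᵥ (L *ᵥ x₀) := by rw [hLpsym, ← hx₀]
      _ = d ⬝ᵥ (Lp *ᵥ (L *ᵥ x₀)) := (dot_mulVec_eq _ _ _).symm
      _ = d ⬝ᵥ ((Lp * L * Lp) *ᵥ d) := by
          rw [hx₀, Matrix.mulVec_mulVec, Matrix.mulVec_mulVec]
      _ = d ⬝ᵥ x₀ := by rw [hMP.2.1, hx₀]
  have hres : res Lp s(i,j) = d ⬝ᵥ x₀ := by rw [res_mk, hx₀, hd]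
  -- the per-k inequality
  have hkle : ∀ k, w e * (2*(d ⬝ᵥ x₀) - x₀ ⬝ᵥ (lapU E (cs (φ k)) *ᵥ x₀)
      - εs (φ k) * (x₀ ⬝ᵥ x₀)) ≤ zk (φ k) e := by
    intro k
    have hq := quad_bound (Amat_isUnit (hcnn (φ k)) (hεpos (φ k))) Amat_transpose
      (quad_Amat_nonneg (hcnn (φ k)) (hεpos (φ k))) d x₀
    rw [quad_Amat, h1x₀] at hq
    have hq' : 2*(d ⬝ᵥ x₀) - x₀ ⬝ᵥ (lapU E (cs (φ k)) *ᵥ x₀) - εs (φ k) * (x₀ ⬝ᵥ x₀)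
        ≤ res (Amat E (cs (φ k)) (εs (φ k)))⁻¹ s(i,j) := by
      rw [res_mk]
      have h0 : ((0:ℝ))^2 = 0 := by norm_num
      rw [h0] at hq
      linarith [hq]
    have h5k := h5 (φ k) e he s(i,j) hf
    have hzke : zk (φ k) e
        = ∑ f ∈ pairs e, cs (φ k) e f * res (Amat E (cs (φ k)) (εs (φ k)))⁻¹ f := by
      rw [hzk]; dsimp only; rw [if_pos he]
    rw [← hzke] at h5k
    calc w e * (2*(d ⬝ᵥ x₀) - x₀ ⬝ᵥ (lapU E (cs (φ k)) *ᵥ x₀) - εs (φ k) * (x₀ ⬝ᵥ x₀))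
        ≤ w e * res (Amat E (cs (φ k)) (εs (φ k)))⁻¹ s(i,j) :=
          mul_le_mul_of_nonneg_left hq' (hw e he).le
      _ ≤ zk (φ k) e := h5k
  -- limits of the left-hand side
  have hcontq : Continuous fun c : Finset (Fin n) → Sym2 (Fin n) → ℝ =>
      x₀ ⬝ᵥ (lapU E c *ᵥ x₀) := by
    have heq : (fun c : Finset (Fin n) → Sym2 (Fin n) → ℝ => x₀ ⬝ᵥ (lapU E c *ᵥ x₀))
        = fun c => ∑ e' ∈ E, ∑ f' ∈ pairs e', c e' f' * (x₀ ⬝ᵥ (edgeMat f' *ᵥ x₀)) := by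
      funext c
      exact quad_lapU E c x₀
    rw [heq]
    exact continuous_finset_sum _ fun e' _ =>
      continuous_finset_sum _ fun f' _ => (keval_cont e' f').mul continuous_const
  have hT1 : Tendsto (fun k => x₀ ⬝ᵥ (lapU E (cs (φ k)) *ᵥ x₀)) atTop
      (𝓝 (x₀ ⬝ᵥ (L *ᵥ x₀))) := by
    rw [hL]
    exact (hcontq.tendsto cstar).comp htendc
  have hT2 : Tendsto (fun k => εs (φ k) * (x₀ ⬝ᵥ x₀)) atTop (𝓝 0) := by
    have hb : Tendsto (fun k : ℕ => εs k) atTop (𝓝 0) := by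
      rw [hεs]
      exact tendsto_one_div_add_atTop_nhds_zero_nat
    have hφt : Tendsto φ atTop atTop := hφ.tendsto_atTop
    have := (hb.comp hφt).mul_const (x₀ ⬝ᵥ x₀)
    rwa [zero_mul] at this
  have hTL : Tendsto (fun k => w e * (2*(d ⬝ᵥ x₀) - x₀ ⬝ᵥ (lapU E (cs (φ k)) *ᵥ x₀)
      - εs (φ k) * (x₀ ⬝ᵥ x₀))) atTop
      (𝓝 (w e * (2*(d ⬝ᵥ x₀) - x₀ ⬝ᵥ (L *ᵥ x₀) - 0))) :=
    tendsto_const_nhds.mul ((tendsto_const_nhds.sub hT1).sub hT2)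
  have hfinal := le_of_tendsto_of_tendsto' hTL (htendze e) hkle
  have heq : w e * (2*(d ⬝ᵥ x₀) - x₀ ⬝ᵥ (L *ᵥ x₀) - 0) = w e * res Lp s(i,j) := by
    rw [hx₀L, hres]
    ring
  rw [heq] at hfinal
  exact hfinal
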